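/- Let p be a prime and let L/K be a finite Galois extension of local fields of characteristic (0,p) with Galois group G, and assume L/K is tamely ramified (the ramification index e_{L/K} is prime to p). Let A and B be 𝒪_L-modules each equipped with an additive action of G that is semilinear over the natural action of G on 𝒪_L, i.e. g·(c·a) = g(c)·(g·a) for all g ∈ G, c ∈ 𝒪_L, a ∈ A, and let f : A → B be a surjective 𝒪_L-linear G-equivariant map. Then the induced map on G-fixed points A^G → B^G is surjective; equivalently, the fixed-points functor from 𝒪_L-modules with semilinear G-action to 𝒪_K-modules is exact. -/

import Mathlib

/-- Data exhibiting `L` as a local field of characteristic `(0, p)`: a multiplicative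
nonarchimedean absolute value `a` (representing the absolute valuation `v` via
`a x = c ^ v x` for a base `0 < c < 1`), a uniformizer `ϖ` generating the (discrete)
value group, residue characteristic `p` (`a p < 1`), completeness, and perfectness of
the residue field (surjectivity of the `p`-power map on residues). -/
structure LocalFieldData (p : ℕ) (L : Type*) [Field L] where
  a : L → ℝ
  a_zero : a 0 = 0
  a_pos : ∀ x : L, x ≠ 0 → 0 < a x
  a_mul : ∀ x y : L, a (x * y) = a x * a y
  a_add : ∀ x y : L, a (x + y) ≤ max (a x) (a y)
  ϖ : L
  ϖ_pos : 0 < a ϖ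
  ϖ_lt_one : a ϖ < 1
  disc : ∀ x : L, x ≠ 0 → ∃ k : ℤ, a x = a ϖ ^ k
  res_char : a (p : L) < 1
  complete : ∀ u : ℕ → L,
    (∀ ε : ℝ, 0 < ε → ∃ N : ℕ, ∀ m ≥ N, ∀ n ≥ N, a (u m - u n) < ε) →
    ∃ l : L, ∀ ε : ℝ, 0 < ε → ∃ N : ℕ, ∀ n ≥ N, a (u n - l) < ε
  perfect_res : ∀ x : L, a x ≤ 1 → ∃ y : L, a y ≤ 1 ∧ a (x - y ^ p) < 1

/-!
Averaging `a ↦ ∑_g g • (c • a)` with an integral `c` such that `∑_g g c = 1` turns a preimage of a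
fixed `b` into a fixed preimage, and `c = t / ∑_g g t` works as soon as the trace of some integral
`t` is a unit. Grouping the trace along the cosets of the inertia group `I`, which acts trivially
on the residue field, gives `|I|` times a sum over coset representatives, up to an element of the
maximal ideal. That sum is a unit for a suitable `t` by Dedekind–Artin independence over the
residue field, and `|I|` is prime to `p` because tameness rules out elements of order `p` in `I`.
-/

open Finset

namespace IsNonarchimedean

section Ring

variable {R : Type*} [Ring R] {v : AbsoluteValue R ℝ}

lemma apply_sub_le_max (hv : IsNonarchimedean v) (x y : R) : v (x - y) ≤ max (v x) (v y) := by
  simpa [sub_eq_add_neg, AbsoluteValue.map_neg] using hv x (-y)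

lemma apply_sum_lt (hv : IsNonarchimedean v) {ι : Type*} {s : Finset ι} {f : ι → R} {C : ℝ}
    (hC : 0 < C) (h : ∀ i ∈ s, v (f i) < C) : v (∑ i ∈ s, f i) < C := by
  classical
  induction s using Finset.induction_on with
  | empty => simpa using hC
  | insert i s hi ih =>
    rw [sum_insert hi]
    exact (hv _ _).trans_lt (max_lt (h i (mem_insert_self i s))
      (ih fun j hj => h j (mem_insert_of_mem hj)))

lemma apply_natCast_eq_one [Nontrivial R] (hv : IsNonarchimedean v) {p n : ℕ} (hp : p.Prime)
    (hvp : v p < 1) (hn : ¬ p ∣ n) : v n = 1 := by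
  obtain ⟨a, b, hab⟩ : IsCoprime (p : ℤ) n :=
    Int.isCoprime_iff_gcd_eq_one.mpr (by exact_mod_cast hp.coprime_iff_not_dvd.mpr hn)
  have hbn : (b * n : R) = 1 + -(a * p) := by
    rw [← sub_eq_add_neg, eq_sub_iff_add_eq, add_comm]
    exact_mod_cast congrArg (Int.cast (R := R)) hab
  have hap : v (-(a * p : R)) < v 1 := by
    rw [AbsoluteValue.map_neg, map_mul, map_one]
    exact (mul_le_of_le_one_left (v.nonneg _) hv.apply_intCast_le_one).trans_lt hvp
  refine le_antisymm hv.apply_natCast_le_one ?_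
  calc 1 = v (b * n : R) := by rw [hbn, hv.add_eq_left_of_lt hap, map_one]
    _ ≤ v n := by rw [map_mul]; exact mul_le_of_le_one_left (v.nonneg _) hv.apply_intCast_le_one

end Ring

section CommRing

variable {R : Type*} [CommRing R] [Nontrivial R] {v : AbsoluteValue R ℝ}

lemma apply_prod_sub_prod_lt_one (hv : IsNonarchimedean v) {ι : Type*} (s : Finset ι)
    {f g : ι → R} (hf : ∀ i ∈ s, v (f i) ≤ 1) (hg : ∀ i ∈ s, v (g i) ≤ 1)
    (hfg : ∀ i ∈ s, v (f i - g i) < 1) : v (∏ i ∈ s, f i - ∏ i ∈ s, g i) < 1 := by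
  classical
  induction s using Finset.induction_on with
  | empty => simp
  | insert i s hi ih =>
    simp only [mem_insert, forall_eq_or_imp] at hf hg hfg
    rw [prod_insert hi, prod_insert hi,
      show f i * ∏ j ∈ s, f j - g i * ∏ j ∈ s, g j
        = f i * (∏ j ∈ s, f j - ∏ j ∈ s, g j) + (f i - g i) * ∏ j ∈ s, g j by ring]
    refine (hv _ _).trans_lt (max_lt ?_ ?_) <;> rw [map_mul]
    · exact (mul_le_of_le_one_left (v.nonneg _) hf.1).trans_lt (ih hf.2 hg.2 hfg.2)
    · refine (mul_le_of_le_one_right (v.nonneg _) ?_).trans_lt hfg.1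
      rw [map_prod]
      exact prod_le_one (fun _ _ => v.nonneg _) hg.2

theorem exists_one_le_sum_mul_apply (hv : IsNonarchimedean v) {ι : Type*} (σ : ι → R →+* R)
    (hσ : ∀ i x, v x ≤ 1 → v (σ i x) ≤ 1) (s : Finset ι)
    (hsep : ∀ i ∈ s, ∀ j ∈ s, i ≠ j → ∃ x, v x ≤ 1 ∧ 1 ≤ v (σ i x - σ j x))
    (c : ι → R) (hc : ∀ i ∈ s, v (c i) ≤ 1) (hunit : ∃ i ∈ s, 1 ≤ v (c i)) :
    ∃ t, v t ≤ 1 ∧ 1 ≤ v (∑ i ∈ s, c i * σ i t) := by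
  classical
  induction s using Finset.strongInduction generalizing c with
  | H s ih =>
  by_contra! hsmall
  obtain ⟨i₀, hi₀, hc₀⟩ := hunit
  by_cases hrest : ∀ i ∈ s.erase i₀, v (c i) < 1
  · have hsum := hsmall 1 (by simp)
    rw [← add_sum_erase s _ hi₀, hv.add_eq_left_of_lt] at hsum
    · simp only [map_one, mul_one] at hsum
      exact hsum.not_ge hc₀
    · simpa using (hv.apply_sum_lt one_pos hrest).trans_le hc₀
  push Not at hrest
  obtain ⟨i₁, hi₁, hc₁⟩ := hrest
  obtain ⟨hne, hi₁s⟩ := mem_erase.mp hi₁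
  obtain ⟨x, hx, hsep₀₁⟩ := hsep i₀ hi₀ i₁ hi₁s hne.symm
  -- Multiplying by `σ i₁ x - σ i x` kills the `i₁`-term and keeps the `i₀`-term a unit.
  set d : ι → R := fun i => c i * (σ i₁ x - σ i x)
  have hd : ∀ i ∈ s, v (d i) ≤ 1 := fun i hi => by
    rw [map_mul]
    exact mul_le_one₀ (hc i hi) (v.nonneg _)
      ((hv.apply_sub_le_max _ _).trans (max_le (hσ _ _ hx) (hσ _ _ hx)))
  obtain ⟨t, ht, hbig⟩ := ih (s.erase i₁) (erase_ssubset hi₁s)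
    (fun i hi j hj => hsep i (mem_of_mem_erase hi) j (mem_of_mem_erase hj)) d
    (fun i hi => hd i (mem_of_mem_erase hi))
    ⟨i₀, mem_erase.mpr ⟨hne.symm, hi₀⟩, by
      rw [map_mul, v.map_sub]; exact one_le_mul_of_one_le_of_one_le hc₀ hsep₀₁⟩
  have hexpand : ∑ i ∈ s.erase i₁, d i * σ i t
      = σ i₁ x * ∑ i ∈ s, c i * σ i t - ∑ i ∈ s, c i * σ i (x * t) := by
    rw [sum_erase s (by simp [d]), mul_sum, ← sum_sub_distrib]
    refine sum_congr rfl fun i _ => ?_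
    rw [map_mul]; ring
  refine hbig.not_gt ?_
  rw [hexpand]
  refine (hv.apply_sub_le_max _ _).trans_lt (max_lt ?_ (hsmall _ ?_))
  · rw [map_mul]
    exact (mul_le_of_le_one_left (v.nonneg _) (hσ _ _ hx)).trans_lt (hsmall t ht)
  · rw [map_mul]; exact mul_le_one₀ hx (v.nonneg _) ht

end CommRing

end IsNonarchimedean

lemma QuotientGroup.sum_comp_mk {G M : Type*} [Group G] [Fintype G] [AddCommMonoid M]
    (I : Subgroup G) [Fintype (G ⧸ I)] (F : G ⧸ I → M) :
    ∑ g : G, F g = Nat.card I • ∑ q, F q := by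
  classical
  rw [← Fintype.sum_fiberwise' (fun g : G => (g : G ⧸ I)) F, smul_sum]
  refine sum_congr rfl fun q _ => ?_
  rw [sum_const, card_univ, Fintype.card_eq_nat_card, ← mul_one (Nat.card I),
    ← Nat.card_unique (α := ({q} : Set _))]
  exact congrArg (· • F q) (QuotientGroup.card_preimage_mk I {q})

namespace AlgEquiv

variable {K L : Type*} [CommSemiring K] [CommSemiring L] [Algebra K L]

lemma apply_sum_apply [Fintype (L ≃ₐ[K] L)] (g : L ≃ₐ[K] L) (x : L) :
    g (∑ h : L ≃ₐ[K] L, h x) = ∑ h : L ≃ₐ[K] L, h x := by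
  rw [map_sum]
  exact Fintype.sum_equiv (Equiv.mulLeft g) _ _ fun _ => rfl

lemma apply_prod_apply (H : Subgroup (L ≃ₐ[K] L)) [Fintype H] {g : L ≃ₐ[K] L} (hg : g ∈ H)
    (x : L) : g (∏ h : H, (h : L ≃ₐ[K] L) x) = ∏ h : H, (h : L ≃ₐ[K] L) x := by
  rw [map_prod]
  exact Fintype.prod_equiv (Equiv.mulLeft ⟨g, hg⟩) _ _ fun _ => rfl

end AlgEquiv

section Field

variable {K L : Type*} [CommSemiring K] [Field L] [Algebra K L]

lemma AlgEquiv.eq_one_of_forall_le_one {v : AbsoluteValue L ℝ} {g : L ≃ₐ[K] L}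
    (hg : ∀ x, v x ≤ 1 → g x = x) : g = 1 := by
  ext x
  rcases le_total (v x) 1 with hx | hx
  · exact hg x hx
  · simpa using hg x⁻¹ (by rw [map_inv₀]; exact inv_le_one_of_one_le₀ hx)

lemma AbsoluteValue.apply_prod_apply_eq_pow (v : AbsoluteValue L ℝ)
    (hinv : ∀ (g : L ≃ₐ[K] L) x, v (g x) = v x) (H : Subgroup (L ≃ₐ[K] L)) [Fintype H]
    (x : L) : v (∏ h : H, (h : L ≃ₐ[K] L) x) = v x ^ Fintype.card H := by
  simp [hinv]

namespace IsNonarchimedean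

variable {v : AbsoluteValue L ℝ}

def inertia (hv : IsNonarchimedean v) (hinv : ∀ (g : L ≃ₐ[K] L) x, v (g x) = v x) :
    Subgroup (L ≃ₐ[K] L) where
  carrier := {g | ∀ x, v x ≤ 1 → v (g x - x) < 1}
  one_mem' _ _ := by simp
  mul_mem' {g h} hg hh x hx := by
    rw [AlgEquiv.mul_apply, ← sub_add_sub_cancel _ (h x)]
    exact (hv _ _).trans_lt (max_lt (hg _ ((hinv h x).trans_le hx)) (hh x hx))
  inv_mem' {g} hg x hx := by
    rw [← hinv g, map_sub, v.map_sub, ← AlgEquiv.mul_apply, mul_inv_cancel, AlgEquiv.one_apply]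
    exact hg x hx

lemma mem_inertia (hv : IsNonarchimedean v) (hinv : ∀ (g : L ≃ₐ[K] L) x, v (g x) = v x)
    {g : L ≃ₐ[K] L} : g ∈ hv.inertia hinv ↔ ∀ x, v x ≤ 1 → v (g x - x) < 1 := Iff.rfl

lemma apply_prod_apply_sub_pow_lt_one (hv : IsNonarchimedean v)
    (hinv : ∀ (g : L ≃ₐ[K] L) x, v (g x) = v x) {H : Subgroup (L ≃ₐ[K] L)} [Fintype H]
    (hH : H ≤ hv.inertia hinv) {x : L} (hx : v x ≤ 1) :
    v (∏ h : H, (h : L ≃ₐ[K] L) x - x ^ Fintype.card H) < 1 := by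
  rw [← Finset.card_univ, ← Finset.prod_const]
  exact hv.apply_prod_sub_prod_lt_one _ (fun h _ => (hinv h x).trans_le hx) (fun _ _ => hx)
    fun h _ => (hv.mem_inertia hinv).mp (hH h.2) x hx

lemma exists_one_le_apply_sub_apply (hv : IsNonarchimedean v)
    (hinv : ∀ (g : L ≃ₐ[K] L) x, v (g x) = v x) {g h : L ≃ₐ[K] L}
    (hgh : g⁻¹ * h ∉ hv.inertia hinv) : ∃ x, v x ≤ 1 ∧ 1 ≤ v (g x - h x) := by
  obtain ⟨x, hx, hbig⟩ : ∃ x, v x ≤ 1 ∧ 1 ≤ v ((g⁻¹ * h) x - x) := by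
    by_contra! H
    exact hgh H
  refine ⟨x, hx, hbig.trans_eq ?_⟩
  rw [← hinv g, map_sub, ← AlgEquiv.mul_apply, mul_inv_cancel_left, v.map_sub]

/-- Writing `x = m + π y` with `m` fixed and `y` integral gives `g x - x = π (g y - y)`, so
iterating shows that `v (g x - x)` is smaller than every power of `v π`. -/
theorem eq_one_of_forall_exists_fixed (hv : IsNonarchimedean v) {π : L} (hπ : π ≠ 0)
    (hπ1 : v π < 1) (hdisc : ∀ x, v x < 1 → v x ≤ v π) {g : L ≃ₐ[K] L}
    (hgv : ∀ x, v (g x) = v x) (hgπ : g π = π)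
    (happrox : ∀ x, v x ≤ 1 → ∃ m, g m = m ∧ v m ≤ 1 ∧ v (x - m) < 1) : g = 1 := by
  have hπ0 : 0 < v π := v.pos hπ
  have hcontract (n : ℕ) : ∀ x, v x ≤ 1 → v (g x - x) ≤ v π ^ n := by
    induction n with
    | zero =>
      intro x hx
      simpa using (hv.apply_sub_le_max _ _).trans (max_le ((hgv x).trans_le hx) hx)
    | succ n ih =>
      intro x hx
      obtain ⟨m, hm, -, hxm⟩ := happrox x hx
      have hy : v ((x - m) / π) ≤ 1 := by
        rw [map_div₀, div_le_one hπ0]; exact hdisc _ hxm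
      have hgx : g x - x = π * (g ((x - m) / π) - (x - m) / π) := by
        rw [map_div₀, map_sub, hm, hgπ]; field_simp; ring
      rw [hgx, map_mul, pow_succ']
      exact mul_le_mul_of_nonneg_left (ih _ hy) hπ0.le
  refine AlgEquiv.eq_one_of_forall_le_one (v := v) fun x hx => ?_
  by_contra hne
  obtain ⟨n, hn⟩ := exists_pow_lt_of_lt_one (v.pos (sub_ne_zero.mpr hne)) hπ1
  exact (hcontract n x hx).not_gt hn

end IsNonarchimedean

end Field

namespace LocalFieldData

variable {p : ℕ} {L : Type*} [Field L] (D : LocalFieldData p L)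

lemma a_nonneg (x : L) : 0 ≤ D.a x := by
  rcases eq_or_ne x 0 with rfl | hx
  exacts [D.a_zero.ge, (D.a_pos x hx).le]

def toAbsoluteValue : AbsoluteValue L ℝ where
  toFun := D.a
  map_mul' := D.a_mul
  nonneg' := D.a_nonneg
  eq_zero' x := ⟨fun h => by_contra fun hx => (D.a_pos x hx).ne' h, fun h => h ▸ D.a_zero⟩
  add_le' x y := (D.a_add x y).trans (max_le_add_of_nonneg (D.a_nonneg x) (D.a_nonneg y))

@[simp] lemma toAbsoluteValue_apply (x : L) : D.toAbsoluteValue x = D.a x := rfl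

lemma isNonarchimedean : IsNonarchimedean D.toAbsoluteValue := D.a_add

lemma a_le_of_lt_one {x : L} (hx : D.a x < 1) : D.a x ≤ D.a D.ϖ := by
  rcases eq_or_ne x 0 with rfl | hx0
  · exact D.a_zero.trans_le D.ϖ_pos.le
  obtain ⟨k, hk⟩ := D.disc x hx0
  rw [hk] at hx ⊢
  have hk0 : 0 < k := by
    by_contra! hk0
    exact hx.not_ge (one_le_zpow_of_nonpos₀ D.ϖ_pos D.ϖ_lt_one.le hk0)
  simpa using zpow_le_zpow_right_of_le_one₀ D.ϖ_pos D.ϖ_lt_one.le hk0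

variable {K : Type*} [CommSemiring K] [Algebra K L]

/-- The norm `N y = ∏_{h ∈ ⟨g⟩} h y` is `g`-fixed with `N y ≡ y ^ p`, so perfectness of the
residue field approximates integral elements by fixed ones; `N ϖ ^ U * π ^ W` with
`U p + W e = 1` is a fixed element with the absolute value of a uniformizer. -/
theorem orderOf_ne_of_mem_inertia [Finite (L ≃ₐ[K] L)] (hp : p.Prime)
    (hinv : ∀ (g : L ≃ₐ[K] L) x, D.a (g x) = D.a x) {π : L} {e : ℕ}
    (hπ : D.a π = D.a D.ϖ ^ e) (he : ¬ p ∣ e) {g : L ≃ₐ[K] L} (hgπ : g π = π)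
    (hg : g ∈ D.isNonarchimedean.inertia hinv) : orderOf g ≠ p := by
  intro hgp
  set H := Subgroup.zpowers g
  have := Fintype.ofFinite H
  have hH : Fintype.card H = p := by rw [Fintype.card_eq_nat_card, Nat.card_zpowers, hgp]
  set N : L → L := fun y => ∏ h : H, (h : L ≃ₐ[K] L) y
  have hNfix (y : L) : g (N y) = N y := AlgEquiv.apply_prod_apply H (Subgroup.mem_zpowers g) y
  have hNa (y : L) : D.a (N y) = D.a y ^ p :=
    (D.toAbsoluteValue.apply_prod_apply_eq_pow hinv H y).trans (by rw [hH]; rfl)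
  have happrox (x : L) (hx : D.a x ≤ 1) : ∃ m, g m = m ∧ D.a m ≤ 1 ∧ D.a (x - m) < 1 := by
    obtain ⟨y, hy, hxy⟩ := D.perfect_res x hx
    refine ⟨N y, hNfix y, by rw [hNa]; exact pow_le_one₀ (D.a_nonneg y) hy, ?_⟩
    have hNy := D.isNonarchimedean.apply_prod_apply_sub_pow_lt_one hinv
      (Subgroup.zpowers_le.mpr hg) hy
    rw [hH, AbsoluteValue.map_sub] at hNy
    calc D.a (x - N y) = D.a ((x - y ^ p) + (y ^ p - N y)) := by rw [sub_add_sub_cancel]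
      _ < 1 := (D.a_add _ _).trans_lt (max_lt hxy hNy)
  obtain ⟨U, W, hUW⟩ : IsCoprime (p : ℤ) e :=
    Int.isCoprime_iff_gcd_eq_one.mpr (by exact_mod_cast hp.coprime_iff_not_dvd.mpr he)
  have hϖ : D.a D.ϖ ≠ 0 := D.ϖ_pos.ne'
  have hunif : D.a (N D.ϖ ^ U * π ^ W) = D.a D.ϖ := by
    simp only [← toAbsoluteValue_apply, map_mul, map_zpow₀]
    simp only [toAbsoluteValue_apply, hNa, hπ, ← zpow_natCast, ← zpow_mul, ← zpow_add₀ hϖ]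
    rw [show (p : ℤ) * U + e * W = 1 by linarith, zpow_one]
  have hg1 : g = 1 := D.isNonarchimedean.eq_one_of_forall_exists_fixed
    (π := N D.ϖ ^ U * π ^ W) (fun h => hϖ (by rw [← hunif, h, D.a_zero]))
    (by rw [toAbsoluteValue_apply, hunif]; exact D.ϖ_lt_one)
    (fun x hx => (D.a_le_of_lt_one hx).trans_eq hunif.symm) (hinv g)
    (by rw [map_mul, map_zpow₀, map_zpow₀, hNfix, hgπ]) happrox
  rw [hg1, orderOf_one] at hgp
  exact hp.one_lt.ne hgp

theorem not_dvd_card_inertia [Finite (L ≃ₐ[K] L)] (hp : p.Prime)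
    (hinv : ∀ (g : L ≃ₐ[K] L) x, D.a (g x) = D.a x) {π : L} {e : ℕ}
    (hπ : D.a π = D.a D.ϖ ^ e) (he : ¬ p ∣ e) (hπfix : ∀ g : L ≃ₐ[K] L, g π = π) :
    ¬ p ∣ Nat.card (D.isNonarchimedean.inertia hinv) := by
  intro hdvd
  have := Fact.mk hp
  obtain ⟨g, hg⟩ := exists_prime_orderOf_dvd_card' p hdvd
  exact D.orderOf_ne_of_mem_inertia hp hinv hπ he (hπfix g) g.2 (by rwa [Subgroup.orderOf_coe])

theorem exists_one_le_sum_apply [Fintype (L ≃ₐ[K] L)] (hp : p.Prime)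
    (hinv : ∀ (g : L ≃ₐ[K] L) x, D.a (g x) = D.a x) {π : L} {e : ℕ}
    (hπ : D.a π = D.a D.ϖ ^ e) (he : ¬ p ∣ e) (hπfix : ∀ g : L ≃ₐ[K] L, g π = π) :
    ∃ t, D.a t ≤ 1 ∧ 1 ≤ D.a (∑ g : L ≃ₐ[K] L, g t) := by
  classical
  have hv := D.isNonarchimedean
  set I := hv.inertia hinv
  let r : (L ≃ₐ[K] L) ⧸ I → L ≃ₐ[K] L := Quotient.out
  have hsep : ∀ q ∈ univ, ∀ q' ∈ univ, q ≠ q' →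
      ∃ x, D.a x ≤ 1 ∧ 1 ≤ D.a ((r q : L →+* L) x - (r q' : L →+* L) x) :=
    fun q _ q' _ hqq' => hv.exists_one_le_apply_sub_apply hinv fun h => hqq' (by
      rw [← QuotientGroup.out_eq' q, ← QuotientGroup.out_eq' q', QuotientGroup.eq]; exact h)
  obtain ⟨t, ht, hT⟩ := hv.exists_one_le_sum_mul_apply (fun q => (r q : L →+* L))
    (fun q x hx => (hinv _ x).trans_le hx) univ hsep 1 (by simp)
    ⟨↑(1 : L ≃ₐ[K] L), mem_univ _, by simp⟩
  refine ⟨t, ht, ?_⟩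
  have hcoset : ∑ g : L ≃ₐ[K] L, r g t = (Nat.card I : L) * ∑ q, r q t := by
    rw [QuotientGroup.sum_comp_mk I (fun q => r q t), nsmul_eq_mul]
  have hdecomp : ∑ g : L ≃ₐ[K] L, g t
      = ∑ g : L ≃ₐ[K] L, r g t + ∑ g : L ≃ₐ[K] L, r g (((r g)⁻¹ * g) t - t) := by
    rw [← sum_add_distrib]
    refine sum_congr rfl fun g _ => ?_
    rw [map_sub, ← AlgEquiv.mul_apply, mul_inv_cancel_left]; ring
  have hunit : 1 ≤ D.a ((Nat.card I : L) * ∑ q, r q t) := by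
    rw [← toAbsoluteValue_apply, map_mul, hv.apply_natCast_eq_one hp D.res_char
      (D.not_dvd_card_inertia hp hinv hπ he hπfix), one_mul]
    simpa using hT
  rw [hdecomp, hcoset, ← toAbsoluteValue_apply, hv.add_eq_left_of_lt]
  · exact hunit
  · refine (hv.apply_sum_lt one_pos fun g _ => ?_).trans_le hunit
    rw [toAbsoluteValue_apply, hinv]
    exact QuotientGroup.eq.mp (QuotientGroup.out_eq' (g : (L ≃ₐ[K] L) ⧸ I)) t ht

end LocalFieldData

theorem exists_fixed_lift_of_sum_apply_eq_one {K L : Type*} [CommSemiring K] [CommRing L]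
    [Algebra K L] [Fintype (L ≃ₐ[K] L)] (O : Subring L) {A B : Type*} [AddCommGroup A]
    [AddCommGroup B] [Module O A] [Module O B]
    (ρA : (L ≃ₐ[K] L) → (A →+ A)) (ρB : (L ≃ₐ[K] L) → (B →+ B))
    (hρA : ∀ g h : L ≃ₐ[K] L, ρA (g * h) = (ρA g).comp (ρA h))
    (hsemiB : ∀ (g : L ≃ₐ[K] L) (c : O) (x : B) (c' : O), (c' : L) = g (c : L) →
      ρB g (c • x) = c' • ρB g x)
    (f : A →ₗ[O] B) (hf : ∀ (g : L ≃ₐ[K] L) (x : A), f (ρA g x) = ρB g (f x))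
    (c : O) (hc : ∀ g : L ≃ₐ[K] L, g c ∈ O) (hsum : ∑ g : L ≃ₐ[K] L, g c = 1)
    {a : A} {b : B} (hb : ∀ g : L ≃ₐ[K] L, ρB g b = b) (hab : f a = b) :
    ∃ a' : A, (∀ g : L ≃ₐ[K] L, ρA g a' = a') ∧ f a' = b := by
  refine ⟨∑ h : L ≃ₐ[K] L, ρA h (c • a), fun g => ?_, ?_⟩
  · rw [map_sum]
    exact Fintype.sum_equiv (Equiv.mulLeft g) _ _ fun h => by simp [hρA]
  · have hterm (h : L ≃ₐ[K] L) : f (ρA h (c • a)) = (⟨h c, hc h⟩ : O) • b := by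
      rw [hf, map_smul, hab, hsemiB h c b ⟨h c, hc h⟩ rfl, hb]
    rw [map_sum, sum_congr rfl fun h _ => hterm h, ← sum_smul]
    convert one_smul O b
    ext
    simpa using hsum

theorem fixedPoints_surjective_of_tame_general
    (p : ℕ) (hp : p.Prime)
    (K L : Type*) [Field K] [Field L] [Algebra K L] [FiniteDimensional K L]
    (DK : LocalFieldData p K) (DL : LocalFieldData p L)
    (hinv : ∀ (g : L ≃ₐ[K] L) (x : L), DL.a (g x) = DL.a x)
    -- `L/K` is tamely ramified: `p ∤ e_{L/K} = v_L(π_K)`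
    (eLK : ℕ) (heLK : DL.a (algebraMap K L DK.ϖ) = DL.a DL.ϖ ^ eLK)
    (htame : ¬ (p ∣ eLK))
    -- the valuation ring `𝒪_L`
    (O : Subring L) (hO : ∀ x : L, x ∈ O ↔ DL.a x ≤ 1)
    (A B : Type*) [AddCommGroup A] [AddCommGroup B] [Module O A] [Module O B]
    -- semilinear `G`-actions on `A` and `B`
    (ρA : (L ≃ₐ[K] L) → (A →+ A)) (ρB : (L ≃ₐ[K] L) → (B →+ B))
    (hρAmul : ∀ g h : L ≃ₐ[K] L, ρA (g * h) = (ρA g).comp (ρA h))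
    (hsemiB : ∀ (g : L ≃ₐ[K] L) (c : O) (x : B) (c' : O), (c' : L) = g (c : L) →
      ρB g (c • x) = c' • ρB g x)
    -- a surjective `𝒪_L`-linear `G`-equivariant map
    (f : A →ₗ[O] B) (hsurj : Function.Surjective f)
    (hequiv : ∀ (g : L ≃ₐ[K] L) (x : A), f (ρA g x) = ρB g (f x)) :
    ∀ b : B, (∀ g : L ≃ₐ[K] L, ρB g b = b) →
      ∃ a : A, (∀ g : L ≃ₐ[K] L, ρA g a = a) ∧ f a = b := by
  intro b hb
  have := AlgEquiv.fintype K L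
  obtain ⟨t, ht, hT⟩ := DL.exists_one_le_sum_apply hp hinv heLK htame fun g => g.commutes DK.ϖ
  set u := ∑ g : L ≃ₐ[K] L, g t
  have hu : u ≠ 0 := fun h => by rw [h, DL.a_zero] at hT; exact zero_lt_one.not_ge hT
  have hufix (g : L ≃ₐ[K] L) : g u = u := AlgEquiv.apply_sum_apply g t
  have hc (g : L ≃ₐ[K] L) : g (t * u⁻¹) ∈ O := by
    rw [hO, hinv, ← DL.toAbsoluteValue_apply, map_mul, map_inv₀]
    exact mul_le_one₀ ht (inv_nonneg.mpr (DL.a_nonneg u)) (inv_le_one_of_one_le₀ hT)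
  obtain ⟨a, ha⟩ := hsurj b
  refine exists_fixed_lift_of_sum_apply_eq_one O ρA ρB hρAmul hsemiB f hequiv
    ⟨t * u⁻¹, by simpa using hc 1⟩ hc ?_ hb ha
  simp only [map_mul, map_inv₀, hufix, ← sum_mul]
  exact mul_inv_cancel₀ hu

/-- Let `L/K` be a finite tamely ramified Galois extension of local
fields of characteristic `(0,p)` with group `G = Gal(L/K)`, and let `𝒪 = 𝒪_L` be the
valuation ring of `L`.  Let `A`, `B` be `𝒪_L`-modules with additive `G`-actions that
are semilinear over the action of `G` on `𝒪_L`, and let `f : A → B` be a surjective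
`𝒪_L`-linear `G`-equivariant map.  Then the induced map on `G`-fixed points
`A^G → B^G` is surjective (equivalently, the fixed-point functor is exact). -/
theorem fixedPoints_surjective_of_tame
    (p : ℕ) (hp : p.Prime)
    (K L : Type*) [Field K] [Field L] [CharZero K] [CharZero L] [Algebra K L]
    [IsGalois K L] [FiniteDimensional K L]
    (DK : LocalFieldData p K) (DL : LocalFieldData p L)
    (hcompat : ∀ x : K, DL.a (algebraMap K L x) = DK.a x)
    (hinv : ∀ (g : L ≃ₐ[K] L) (x : L), DL.a (g x) = DL.a x)
    -- `L/K` is tamely ramified: `p ∤ e_{L/K} = v_L(π_K)`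
    (eLK : ℕ) (heLK : DL.a (algebraMap K L DK.ϖ) = DL.a DL.ϖ ^ eLK)
    (htame : ¬ (p ∣ eLK))
    -- the valuation ring `𝒪_L`
    (O : Subring L) (hO : ∀ x : L, x ∈ O ↔ DL.a x ≤ 1)
    (A B : Type*) [AddCommGroup A] [AddCommGroup B] [Module O A] [Module O B]
    -- semilinear `G`-actions on `A` and `B`
    (ρA : (L ≃ₐ[K] L) → (A →+ A)) (ρB : (L ≃ₐ[K] L) → (B →+ B))
    (hρA1 : ρA 1 = AddMonoidHom.id A)
    (hρAmul : ∀ g h : L ≃ₐ[K] L, ρA (g * h) = (ρA g).comp (ρA h))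
    (hρB1 : ρB 1 = AddMonoidHom.id B)
    (hρBmul : ∀ g h : L ≃ₐ[K] L, ρB (g * h) = (ρB g).comp (ρB h))
    (hsemiA : ∀ (g : L ≃ₐ[K] L) (c : O) (x : A) (c' : O), (c' : L) = g (c : L) →
      ρA g (c • x) = c' • ρA g x)
    (hsemiB : ∀ (g : L ≃ₐ[K] L) (c : O) (x : B) (c' : O), (c' : L) = g (c : L) →
      ρB g (c • x) = c' • ρB g x)
    -- a surjective `𝒪_L`-linear `G`-equivariant map
    (f : A →ₗ[O] B) (hsurj : Function.Surjective f)
    (hequiv : ∀ (g : L ≃ₐ[K] L) (x : A), f (ρA g x) = ρB g (f x)) :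
    ∀ b : B, (∀ g : L ≃ₐ[K] L, ρB g b = b) →
      ∃ a : A, (∀ g : L ≃ₐ[K] L, ρA g a = a) ∧ f a = b :=
  fixedPoints_surjective_of_tame_general p hp K L DK DL hinv eLK heLK htame O hO A B ρA ρB hρAmul
    hsemiB f hsurj hequiv
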